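/- Let 𝓗 be the monoid, under composition (f·h := f∘h), of all weakly increasing surjections f of the positive integers onto themselves for which there is a constant c with f(m) = m − c for all sufficiently large m. Then the assignment η_k ↦ (the map m ↦ m for m ≤ k, m ↦ m−1 for m > k) extends to a monoid isomorphism from the monoid presented by generators η_k (k ≥ 1) with defining relations η_ℓ·η_k = η_k·η_{ℓ+1} for all ℓ ≥ k ≥ 1, onto 𝓗. -/

import Mathlib

/-- The defining relation of the abstract hedge monoid:
`η_ℓ * η_k = η_k * η_{ℓ+1}` for `ℓ ≥ k`. -/
def HedgeRel : FreeMonoid ℕ+ → FreeMonoid ℕ+ → Prop := fun a b =>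
  ∃ k l : ℕ+, k ≤ l ∧ a = FreeMonoid.of l * FreeMonoid.of k ∧
    b = FreeMonoid.of k * FreeMonoid.of (l + 1)

/-- The abstractly presented hedge monoid. -/
abbrev HedgeMonoid := (conGen HedgeRel).Quotient

/-- The generator `η_k` of the presented hedge monoid. -/
def eta (k : ℕ+) : HedgeMonoid := (conGen HedgeRel).mk' (FreeMonoid.of k)

/-- The concrete hedge `η_k : ℕ+ → ℕ+`, as an element of the composition monoid
`Function.End ℕ+` (in which `f * h = f ∘ h`). -/
def etaFun (k : ℕ+) : Function.End ℕ+ := fun m => if m ≤ k then m else m - 1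

/-!
Using `η_ℓ η_k = η_k η_{ℓ+1}` for `k ≤ ℓ` to move letters to the right, every element of the
presented monoid is a product `η_{a₁} ⋯ η_{aᵣ}` with `a₁ < ⋯ < aᵣ`. Such a product acts on `ℕ+`
by `m ↦ m - #{i | aᵢ < m}`, and this counting function determines the `aᵢ`; so the normal form
can be read off the map, which gives injectivity. Conversely, a map `f` in `𝓗` fixes `1` and
climbs by one at each step except at its plateaus `{a | f (a + 1) = f a}`, of which there are
finitely many since `f` is eventually a shift; so `f` is the product over its plateaus.
-/

lemma etaFun_coe (k m : ℕ+) :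
    ((etaFun k m : ℕ+) : ℕ) = if (m : ℕ) ≤ k then (m : ℕ) else (m : ℕ) - 1 := by
  unfold etaFun
  split_ifs with h h' h'
  · rfl
  · exact absurd (PNat.coe_le_coe m k |>.mpr h) h'
  · exact absurd (PNat.coe_le_coe m k |>.mp h') h
  · exact PNat.sub_coe m 1 ▸ if_pos (one_lt_of_gt (not_le.mp h))

lemma etaFun_mul_etaFun {k l : ℕ+} (h : k ≤ l) :
    etaFun l * etaFun k = etaFun k * etaFun (l + 1) := by
  funext m
  apply PNat.coe_injective
  change ((etaFun l (etaFun k m) : ℕ+) : ℕ) = etaFun k (etaFun (l + 1) m)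
  have hkl : (k : ℕ) ≤ l := h
  have hm := m.pos
  rw [etaFun_coe, etaFun_coe, etaFun_coe, etaFun_coe, PNat.add_coe, PNat.one_coe]
  split_ifs <;> omega

lemma eta_mul_eta {k l : ℕ+} (h : k ≤ l) : eta l * eta k = eta k * eta (l + 1) :=
  (Con.eq _).mpr <| ConGen.Rel.of _ _ ⟨k, l, h, rfl, rfl⟩

lemma exists_eta_mul_prod_eq (a : ℕ+) {u : List ℕ+} (hu : u.Pairwise (· < ·)) :
    ∃ v : List ℕ+, v.Pairwise (· < ·) ∧ (∀ x ∈ v, x ∈ u ∨ a ≤ x) ∧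
      eta a * (u.map eta).prod = (v.map eta).prod := by
  induction u generalizing a with
  | nil => exact ⟨[a], List.pairwise_singleton _ a, by simp, by simp⟩
  | cons b u ih =>
    obtain ⟨hb, hu'⟩ := List.pairwise_cons.mp hu
    by_cases hab : a < b
    · refine ⟨a :: b :: u, List.pairwise_cons.mpr ⟨?_, hu⟩, by simp_all, rfl⟩
      simpa [hab] using fun x hx => hab.trans (hb x hx)
    · obtain ⟨v, hv, hmem, heq⟩ := ih (a + 1) hu'
      have hba : b ≤ a := not_lt.mp hab
      have hbv : ∀ x ∈ v, b < x := fun x hx =>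
        (hmem x hx).elim (hb x) fun h => hba.trans_lt ((PNat.lt_add_right a 1).trans_le h)
      refine ⟨b :: v, List.pairwise_cons.mpr ⟨hbv, hv⟩, ?_, ?_⟩
      · intro x hx
        rcases List.mem_cons.mp hx with rfl | hx
        · simp
        · exact (hmem x hx).imp (List.mem_cons_of_mem b)
            fun h => ((PNat.lt_add_right a 1).trans_le h).le
      · rw [List.map_cons, List.prod_cons, List.map_cons, List.prod_cons, ← mul_assoc,
          eta_mul_eta hba, mul_assoc, heq]

lemma exists_sorted_prod_eta_eq (x : HedgeMonoid) :
    ∃ u : List ℕ+, u.Pairwise (· < ·) ∧ (u.map eta).prod = x := by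
  obtain ⟨w, rfl⟩ := Con.mk'_surjective x
  induction w using FreeMonoid.inductionOn' with
  | one => exact ⟨[], List.Pairwise.nil, (map_one _).symm⟩
  | of_mul a w ih =>
    obtain ⟨u, hu, hequ⟩ := ih
    obtain ⟨v, hv, -, heqv⟩ := exists_eta_mul_prod_eq a hu
    exact ⟨v, hv, by rw [← heqv, hequ, map_mul]; rfl⟩

lemma conGen_hedgeRel_le_ker : conGen HedgeRel ≤ Con.ker (FreeMonoid.lift etaFun) :=
  Con.conGen_le.mpr fun _ _ ⟨_, _, hkl, ha, hb⟩ => by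
    simp only [ha, hb, Con.ker_rel, map_mul, FreeMonoid.lift_eval_of, etaFun_mul_etaFun hkl]

def hedgePhi : HedgeMonoid →* Function.End ℕ+ := Con.lift _ _ conGen_hedgeRel_le_ker

@[simp]
lemma hedgePhi_eta (k : ℕ+) : hedgePhi (eta k) = etaFun k :=
  (Con.lift_mk' _ _).trans (FreeMonoid.lift_eval_of _ _)

lemma hedgePhi_prod_map_eta (u : List ℕ+) :
    hedgePhi (u.map eta).prod = (u.map etaFun).prod := by
  simp [map_list_prod, Function.comp_def]

lemma prod_map_etaFun_coe {u : List ℕ+} (hu : u.Pairwise (· < ·)) (m : ℕ+) :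
    (((u.map etaFun).prod m : ℕ+) : ℕ) = m - u.countP (· < m) := by
  induction u using List.reverseRecOn generalizing m with
  | nil => rfl
  | append_singleton u a ih =>
    obtain ⟨hu, -, hua⟩ := List.pairwise_append.mp hu
    rw [List.map_append, List.prod_append, List.map_singleton, List.prod_singleton,
      List.countP_append]
    change (((u.map etaFun).prod (etaFun a m) : ℕ+) : ℕ) = _
    rw [ih hu]
    by_cases hma : m ≤ a
    · simp [etaFun, hma, not_lt.mpr hma]
    -- every letter of `u` lies below `a`, so it is counted both at `m` and at `m - 1`
    · have hp : ((etaFun a m : ℕ+) : ℕ) = m - 1 := by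
        rw [etaFun_coe, if_neg (by exact_mod_cast hma)]
      have hap : a ≤ etaFun a m := by
        rw [← PNat.coe_le_coe, hp]
        have := (PNat.coe_lt_coe a m).mpr (not_le.mp hma)
        omega
      have hcount (p : ℕ+) (hp : a ≤ p) : u.countP (· < p) = u.length :=
        List.countP_eq_length.mpr fun x hx => by
          simpa using (hua x hx a (List.mem_singleton_self a)).trans_le hp
      rw [hp, hcount _ hap, hcount m (not_le.mp hma).le]
      simp only [not_le.mp hma, decide_true, List.countP_cons_of_pos, List.countP_nil, zero_add]
      omega

lemma List.countP_lt_add_one (u : List ℕ+) (a : ℕ+) :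
    u.countP (· < a + 1) = u.countP (· < a) + u.count a := by
  induction u with
  | nil => rfl
  | cons b u ih =>
    rw [List.countP_cons, List.countP_cons, List.count_cons, ih]
    rcases lt_trichotomy b a with h | rfl | h
    · simp [h, h.ne, PNat.lt_add_one_iff.mpr h.le, add_right_comm]
    · simp [add_assoc]
    · simp [h.not_gt, h.ne', h.not_ge]

lemma List.eq_of_countP_lt_eq {u v : List ℕ+} (hu : u.Pairwise (· < ·))
    (hv : v.Pairwise (· < ·)) (h : ∀ m, u.countP (· < m) = v.countP (· < m)) : u = v := by
  have hcount (a : ℕ+) : u.count a = v.count a := by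
    have := h (a + 1)
    rw [List.countP_lt_add_one, List.countP_lt_add_one, h a] at this
    omega
  refine List.Perm.eq_of_pairwise' hu hv <| (List.perm_ext_iff_of_nodup hu.nodup hv.nodup).mpr
    fun a => ?_
  rw [← List.count_pos_iff, ← List.count_pos_iff, hcount]

lemma prod_map_etaFun_inj {u v : List ℕ+} (hu : u.Pairwise (· < ·)) (hv : v.Pairwise (· < ·))
    (h : (u.map etaFun).prod = (v.map etaFun).prod) : u = v := by
  refine List.eq_of_countP_lt_eq hu hv fun m => ?_
  have hmu := prod_map_etaFun_coe hu m
  have hmv := prod_map_etaFun_coe hv m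
  -- the values are positive, so the truncated subtractions can be cancelled
  have hpos := ((v.map etaFun).prod m).pos
  rw [h] at hmu
  omega

def hedgeSubmonoid : Submonoid (Function.End ℕ+) where
  carrier := {f | Monotone f ∧ Function.Surjective f ∧
    ∃ c N : ℕ, ∀ m : ℕ+, N ≤ (m : ℕ) → ((f m : ℕ+) : ℕ) = (m : ℕ) - c}
  one_mem' := ⟨monotone_id, Function.surjective_id, 0, 0, fun _ _ => rfl⟩
  mul_mem' := by
    rintro f g ⟨hfm, hfs, cf, Nf, hf⟩ ⟨hgm, hgs, cg, Ng, hg⟩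
    refine ⟨hfm.comp hgm, hfs.comp hgs, cf + cg, max Ng (Nf + cg), fun m hm => ?_⟩
    have hgm := hg m (le_of_max_le_left hm)
    change ((f (g m) : ℕ+) : ℕ) = m - (cf + cg)
    rw [hf (g m) (by omega)]
    omega

lemma etaFun_mem_hedgeSubmonoid (k : ℕ+) : etaFun k ∈ hedgeSubmonoid := by
  refine ⟨fun x y hxy => ?_, fun n => ?_, 1, k + 1, fun m hm => ?_⟩
  · have hxy : (x : ℕ) ≤ y := hxy
    have hx := x.pos
    rw [← PNat.coe_le_coe, etaFun_coe, etaFun_coe]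
    split_ifs <;> omega
  · by_cases h : n ≤ k
    · exact ⟨n, if_pos h⟩
    · refine ⟨n + 1, PNat.coe_injective ?_⟩
      have := (PNat.coe_lt_coe k n).mpr (not_le.mp h)
      rw [etaFun_coe, PNat.add_coe, PNat.one_coe, if_neg (by omega), Nat.add_sub_cancel]
  · rw [etaFun_coe, if_neg (by omega)]

lemma Monotone.map_bot_of_surjective {α β : Type*} [Preorder α] [OrderBot α] [PartialOrder β]
    [OrderBot β] {f : α → β} (hf : Monotone f) (hs : Function.Surjective f) : f ⊥ = ⊥ :=
  let ⟨_, hx⟩ := hs ⊥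
  le_bot_iff.mp (hx ▸ hf bot_le)

lemma PNat.map_add_one_le_of_monotone_of_surjective {f : ℕ+ → ℕ+} (hf : Monotone f)
    (hs : Function.Surjective f) (m : ℕ+) : f (m + 1) ≤ f m + 1 := by
  obtain ⟨x, hx⟩ := hs (f m + 1)
  have hmx : m < x := lt_of_not_ge fun hxm => (hx ▸ hf hxm).not_gt (PNat.lt_add_right _ _)
  exact hx ▸ hf (PNat.add_one_le_iff.mpr hmx)

/-- Such an `f` climbs by one at each step except at its plateaus. -/
lemma PNat.apply_eq_sub_countP_of_monotone_of_surjective {f : ℕ+ → ℕ+} (hf : Monotone f)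
    (hs : Function.Surjective f) {L : List ℕ+} (hL : L.Nodup)
    (hmem : ∀ a, a ∈ L ↔ f (a + 1) = f a) (m : ℕ+) :
    (f m : ℕ) = m - L.countP (· < m) := by
  induction m using PNat.recOn with
  | one =>
    rw [← PNat.bot_eq_one, hf.map_bot_of_surjective hs, List.countP_eq_zero.mpr (by simp)]
    rfl
  | succ m ih =>
    have hpos := (f m).pos
    rw [List.countP_lt_add_one, PNat.add_coe, PNat.one_coe]
    by_cases hm : m ∈ L
    · rw [(hmem m).mp hm, List.count_eq_one_of_mem hL hm]
      omega
    · have hstep : f (m + 1) = f m + 1 := le_antisymm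
        (PNat.map_add_one_le_of_monotone_of_surjective hf hs m)
        (PNat.add_one_le_iff.mpr <| (hf (PNat.lt_add_right m 1).le).lt_of_ne
          fun h => hm ((hmem m).mpr h.symm))
      rw [hstep, List.count_eq_zero_of_not_mem hm, PNat.add_coe, PNat.one_coe]
      omega

lemma exists_sorted_prod_etaFun_eq {f : Function.End ℕ+} (hf : f ∈ hedgeSubmonoid) :
    ∃ u : List ℕ+, u.Pairwise (· < ·) ∧ (u.map etaFun).prod = f := by
  obtain ⟨hmono, hsurj, c, N, hshift⟩ := hf
  have hbound (a : ℕ+) (ha : f (a + 1) = f a) : (a : ℕ) < N := by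
    by_contra! haN
    have h₁ := hshift a haN
    have h₂ := hshift (a + 1) (haN.trans (PNat.lt_add_right a 1).le)
    have hpos := (f a).pos
    rw [ha, PNat.add_coe, PNat.one_coe] at h₂
    omega
  have hfin : {a : ℕ+ | f (a + 1) = f a}.Finite :=
    ((Set.finite_lt_nat N).preimage PNat.coe_injective.injOn).subset hbound
  set L := hfin.toFinset.sort
  have hL : L.Pairwise (· < ·) := (Finset.sortedLT_sort _).pairwise
  refine ⟨L, hL, funext fun m => PNat.coe_injective ?_⟩
  rw [prod_map_etaFun_coe hL, PNat.apply_eq_sub_countP_of_monotone_of_surjective hmono hsurj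
    hL.nodup (by simp [L])]

lemma range_hedgePhi : Set.range hedgePhi = hedgeSubmonoid := by
  ext f
  constructor
  · rintro ⟨x, rfl⟩
    obtain ⟨u, -, rfl⟩ := exists_sorted_prod_eta_eq x
    rw [hedgePhi_prod_map_eta]
    exact Submonoid.list_prod_mem _ (by simpa using fun k _ => etaFun_mem_hedgeSubmonoid k)
  · intro hf
    obtain ⟨u, -, rfl⟩ := exists_sorted_prod_etaFun_eq hf
    exact ⟨_, hedgePhi_prod_map_eta u⟩

lemma hedgePhi_injective : Function.Injective hedgePhi := by
  intro x y hxy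
  obtain ⟨u, hu, rfl⟩ := exists_sorted_prod_eta_eq x
  obtain ⟨v, hv, rfl⟩ := exists_sorted_prod_eta_eq y
  rw [hedgePhi_prod_map_eta, hedgePhi_prod_map_eta] at hxy
  rw [prod_map_etaFun_inj hu hv hxy]

/-- `η_k ↦ etaFun k` extends to a monoid isomorphism from the presented
hedge monoid onto the monoid `𝓗` of weakly increasing surjections of `ℕ+` that are
eventually a downward shift `m ↦ m - c` (a submonoid of `Function.End ℕ+`, where
multiplication is composition). -/
theorem hedgeMonoid_iso_concrete :
    ∃ φ : HedgeMonoid →* Function.End ℕ+,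
      (∀ k : ℕ+, φ (eta k) = etaFun k) ∧
      Function.Injective φ ∧
      Set.range φ = {f : Function.End ℕ+ |
        Monotone f ∧ Function.Surjective f ∧
        ∃ c N : ℕ, ∀ m : ℕ+, N ≤ (m : ℕ) → ((f m : ℕ+) : ℕ) = (m : ℕ) - c} :=
  ⟨hedgePhi, hedgePhi_eta, hedgePhi_injective, range_hedgePhi⟩
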